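/- Let μ₁, μ₂, c₁, c₂, p₁, p₂, w > 0 and let q₁* be the point defined by q₁* = (1/2)Aμ₁² − √((1/4)A²μ₁⁴ − μ₁²w²) with A = 2w/μ₁ + p₁²c₂³/(2p₂³c₁μ₂²). Then q₁* is the unique global minimizer of f̄(q₁) = p₁²q₁²/(2μ₁c₁) + (2p₂³μ₂²/(3c₂³))·(w − q₁/μ₁)³ on the interval [0, μ₁w]. -/

import Mathlib

/-!
Writing `m = μ₁ w`, the objective is `f q = a q² + b (m - q)³` with `a, b > 0`. If `q₀ ≤ m` is a
critical point, `2 a q₀ = 3 b (m - q₀)²`, then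
`f q - f q₀ = (q - q₀)² (a + b ((m - q) + 2 (m - q₀)))`,
whose second factor is positive for `q ≤ m`; so `q₀` is the unique minimizer on `q ≤ m`.
The critical points are the roots of `q² - 2 B q + m² = 0` with `B = m + a / (3 b) = A μ₁² / 2`,
and `q₁*` is the smaller one, `B - √(B² - m²)`, which lies in `[0, m]`.
-/

open Real Set

section QuadAddCube

variable {a b m q₀ : ℝ}

lemma quad_add_cube_sub_eq (hcrit : 2 * a * q₀ = 3 * b * (m - q₀) ^ 2) (q : ℝ) :
    (a * q ^ 2 + b * (m - q) ^ 3) - (a * q₀ ^ 2 + b * (m - q₀) ^ 3)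
      = (q - q₀) ^ 2 * (a + b * ((m - q) + 2 * (m - q₀))) := by
  linear_combination (q - q₀) * hcrit

lemma quad_add_cube_factor_pos (ha : 0 < a) (hb : 0 ≤ b) (hq₀ : q₀ ≤ m) {q : ℝ} (hq : q ≤ m) :
    0 < a + b * ((m - q) + 2 * (m - q₀)) := by
  have : 0 ≤ b * ((m - q) + 2 * (m - q₀)) := mul_nonneg hb (by linarith)
  linarith

lemma quad_add_cube_le (ha : 0 < a) (hb : 0 ≤ b) (hq₀ : q₀ ≤ m)
    (hcrit : 2 * a * q₀ = 3 * b * (m - q₀) ^ 2) {q : ℝ} (hq : q ≤ m) :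
    a * q₀ ^ 2 + b * (m - q₀) ^ 3 ≤ a * q ^ 2 + b * (m - q) ^ 3 := by
  have h := quad_add_cube_sub_eq hcrit q
  have := mul_nonneg (sq_nonneg (q - q₀)) (quad_add_cube_factor_pos ha hb hq₀ hq).le
  linarith

lemma eq_of_quad_add_cube_eq (ha : 0 < a) (hb : 0 ≤ b) (hq₀ : q₀ ≤ m)
    (hcrit : 2 * a * q₀ = 3 * b * (m - q₀) ^ 2) {q : ℝ} (hq : q ≤ m)
    (heq : a * q ^ 2 + b * (m - q) ^ 3 = a * q₀ ^ 2 + b * (m - q₀) ^ 3) : q = q₀ := by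
  have h := quad_add_cube_sub_eq hcrit q
  rw [heq, sub_self, eq_comm, mul_eq_zero] at h
  rcases h with h | h
  · exact sub_eq_zero.mp (pow_eq_zero_iff two_ne_zero |>.mp h)
  · exact absurd h (quad_add_cube_factor_pos ha hb hq₀ hq).ne'

end QuadAddCube

section SmallerRoot

variable {B m : ℝ}

lemma sub_sqrt_sq_sub_sq_mem_Icc (hm : 0 ≤ m) (hmB : m ≤ B) :
    B - √(B ^ 2 - m ^ 2) ∈ Icc 0 m := by
  have hB : 0 ≤ B := hm.trans hmB
  constructor
  · rw [sub_nonneg, sqrt_le_left hB]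
    nlinarith
  · rw [sub_le_comm, le_sqrt (by linarith) (by nlinarith)]
    nlinarith

lemma two_mul_sub_sqrt_sq_sub_sq {a b : ℝ} (hab : a = 3 * b * (B - m)) (hmB : m ^ 2 ≤ B ^ 2) :
    2 * a * (B - √(B ^ 2 - m ^ 2)) = 3 * b * (m - (B - √(B ^ 2 - m ^ 2))) ^ 2 := by
  have hs := sq_sqrt (sub_nonneg.mpr hmB)
  subst hab
  linear_combination (-3 * b) * hs

end SmallerRoot

theorem stmt_2 (μ₁ μ₂ c₁ c₂ p₁ p₂ w : ℝ)
    (hμ₁ : 0 < μ₁) (hμ₂ : 0 < μ₂) (hc₁ : 0 < c₁) (hc₂ : 0 < c₂)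
    (hp₁ : 0 < p₁) (hp₂ : 0 < p₂) (hw : 0 < w)
    (f : ℝ → ℝ)
    (hf : f = fun q₁ : ℝ => p₁ ^ 2 * q₁ ^ 2 / (2 * μ₁ * c₁)
        + (2 * p₂ ^ 3 * μ₂ ^ 2 / (3 * c₂ ^ 3)) * (w - q₁ / μ₁) ^ 3)
    (A : ℝ) (hA : A = 2 * w / μ₁ + p₁ ^ 2 * c₂ ^ 3 / (2 * p₂ ^ 3 * c₁ * μ₂ ^ 2))
    (q₁star : ℝ)
    (hq : q₁star = (1 / 2) * A * μ₁ ^ 2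
        - Real.sqrt ((1 / 4) * A ^ 2 * μ₁ ^ 4 - μ₁ ^ 2 * w ^ 2)) :
    q₁star ∈ Set.Icc 0 (μ₁ * w) ∧
    (∀ q ∈ Set.Icc 0 (μ₁ * w), f q₁star ≤ f q) ∧
    (∀ q ∈ Set.Icc 0 (μ₁ * w), f q = f q₁star → q = q₁star) := by
  set a := p₁ ^ 2 / (2 * μ₁ * c₁)
  set b := 2 * p₂ ^ 3 * μ₂ ^ 2 / (3 * c₂ ^ 3 * μ₁ ^ 3)
  set m := μ₁ * w
  set B := (1 / 2) * A * μ₁ ^ 2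
  have ha : 0 < a := by positivity
  have hb : 0 < b := by positivity
  have hm : 0 < m := by positivity
  have hfq : ∀ q, f q = a * q ^ 2 + b * (m - q) ^ 3 := by
    intro q; simp only [hf, a, b, m]; field_simp
  have hab : a = 3 * b * (B - m) := by
    simp only [a, b, B, m, hA]; field_simp; ring
  have hmB : m ≤ B := (sub_pos.mp (pos_of_mul_pos_right (hab ▸ ha) (by positivity))).le
  have hq' : q₁star = B - √(B ^ 2 - m ^ 2) := by rw [hq]; simp only [B, m]; ring_nf
  have hmem : q₁star ∈ Icc 0 m := hq' ▸ sub_sqrt_sq_sub_sq_mem_Icc hm.le hmB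
  have hcrit : 2 * a * q₁star = 3 * b * (m - q₁star) ^ 2 :=
    hq' ▸ two_mul_sub_sqrt_sq_sub_sq hab (pow_le_pow_left₀ hm.le hmB 2)
  refine ⟨hmem, fun q hq => ?_, fun q hq heq => ?_⟩
  · rw [hfq, hfq]
    exact quad_add_cube_le ha hb.le hmem.2 hcrit hq.2
  · rw [hfq, hfq] at heq
    exact eq_of_quad_add_cube_eq ha hb.le hmem.2 hcrit hq.2 heq
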